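/- arXiv:2501.10735 — 4 statements merged into one kernel-verified Lean document; each statement's English description precedes it below -/
import Mathlib

section
/- If X and Y are objects of B^split, then X ⊗ Y is again an object of B^split; that is, the splitting subcategory B^split is closed under tensor products and is therefore a monoidal subcategory of B. -/
/-!
Split objects are closed under isomorphisms, quotients (a quotient of a simple object is zero
or isomorphic to it) and extensions. Since `- ⊗ Y` is right exact, it sends an extension
`0 → X₁ → X₂ → L → 0` to an extension of `L ⊗ Y` by a quotient of `X₁ ⊗ Y`; so by induction on
the filtration of `X`, and then likewise in the other variable, everything reduces to `L ⊗ M`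
with `L, M` in `C`. That object lies in `C`, and objects of `C` are split because they have
finite length.
-/

open CategoryTheory CategoryTheory.Limits CategoryTheory.MonoidalCategory

universe v u

variable {B : Type u} [CategoryTheory.Category.{v} B]

/-- The splitting subcategory `B^split` determined by a class `P` of objects of `B`
(the objects of the full subcategory `C`): an object lies in `B^split` iff it admits
a finite chain of subobjects `0 = X₀ ≤ X₁ ≤ … ≤ X_m = X` in which every subquotient
`X_k/X_{k−1}` is a simple object belonging to `C`.  Equivalently (and this is the
inductive formulation used here), the class of such objects is the smallest class
containing the zero objects and closed under extensions (short exact sequences)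
whose quotient term is a simple object of `C`. -/
inductive IsSplitObj [CategoryTheory.Abelian B] (P : B → Prop) : B → Prop
  | of_isZero (X : B) (h : IsZero X) : IsSplitObj P X
  | of_extension (S : CategoryTheory.ShortComplex B) (hS : S.ShortExact)
      (h₁ : IsSplitObj P S.X₁) (h₃ : CategoryTheory.Simple S.X₃) (hP : P S.X₃) :
      IsSplitObj P S.X₂

section Abelian

variable [Abelian B]

theorem CategoryTheory.ShortComplex.ShortExact.pullback_of_epi {S : ShortComplex B}
    (hS : S.ShortExact) {X : B} (f : X ⟶ S.X₂) [Epi f] :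
    (ShortComplex.mk (pullback.fst f S.f) (f ≫ S.g)
      (by rw [pullback.condition_assoc, S.zero, comp_zero])).ShortExact := by
  have := hS.mono_f
  have := hS.epi_g
  refine .mk' (exact_of_f_is_kernel _ (KernelFork.IsLimit.ofι' _ _ fun k hk => ?_))
    inferInstance (epi_comp f S.g)
  have hk' : (k ≫ f) ≫ S.g = 0 := by simpa using hk
  exact ⟨pullback.lift k (hS.exact.lift _ hk') (by simp), pullback.lift_fst _ _ _⟩

theorem kernelSubobject_lt_comp_of_not_mono {X Y Z : B} (q : X ⟶ Y) [Epi q] {g : Y ⟶ Z}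
    (hg : ¬ Mono g) : kernelSubobject q < kernelSubobject (q ≫ g) := by
  refine (kernelSubobject_comp_le q g).lt_of_ne fun heq => hg ?_
  refine Preadditive.mono_of_cancel_zero g fun k hk => ?_
  obtain ⟨T, π, _, x, hx⟩ := surjective_up_to_refinements_of_epi q k
  have hxg : x ≫ q ≫ g = 0 := by rw [← Category.assoc, ← hx, Category.assoc, hk, comp_zero]
  have hxq : x ≫ q = 0 := (kernelSubobject_factors_iff q x).1
    (heq ▸ (kernelSubobject_factors_iff (q ≫ g) x).2 hxg)
  rw [← cancel_epi π, hx, hxq, comp_zero]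

end Abelian

namespace IsSplitObj

variable [Abelian B] {P : B → Prop}

theorem of_iso {X Y : B} (e : X ≅ Y) (hX : IsSplitObj P X) : IsSplitObj P Y := by
  cases hX with
  | of_isZero X h => exact .of_isZero Y (h.of_iso e.symm)
  | of_extension S hS h₁ h₃ hP =>
    let e' : S ≅ ShortComplex.mk (S.f ≫ e.hom) (e.inv ≫ S.g) (by simp) :=
      ShortComplex.isoMk (Iso.refl _) e (Iso.refl _)
    exact .of_extension _ (ShortComplex.shortExact_of_iso e' hS) h₁ h₃ hP

theorem of_simple {X : B} [Simple X] (hX : P X) : IsSplitObj P X :=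
  .of_extension (ShortComplex.kernelSequence (𝟙 X))
    (.mk' (ShortComplex.kernelSequence_exact _) inferInstance (inferInstanceAs (Epi (𝟙 X))))
    (.of_isZero _ (isZero_kernel_of_mono _)) ‹Simple X› hX

theorem of_epi_of_simple {X Y : B} [Simple X] (hX : P X) (t : X ⟶ Y) [Epi t] :
    IsSplitObj P Y := by
  by_cases ht : t = 0
  · have : Epi (0 : X ⟶ Y) := ht ▸ ‹Epi t›
    exact .of_isZero Y (IsZero.of_epi_zero X Y)
  · have := isIso_of_epi_of_nonzero ht
    exact (of_simple hX).of_iso (asIso t)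

theorem of_isSplitObj_kernel {Z : B} (hZ : IsSplitObj P Z) {X : B} (f : X ⟶ Z) [Epi f]
    (hK : IsSplitObj P (kernel f)) : IsSplitObj P X := by
  induction hZ generalizing X with
  | of_isZero Z hZ =>
    have := kernel.ι_of_zero (hZ.eq_of_tgt f 0)
    exact hK.of_iso (asIso (kernel.ι f))
  | of_extension D hD _ hD₃ hDP ih =>
    -- `X` is an extension of `D.X₃` by `pullback f D.f`, which maps onto `D.X₁` with kernel
    -- `kernel f`.
    have := hD.mono_f
    have : Epi (pullback.snd f D.f) := Abelian.epi_pullback_of_epi_f f D.f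
    let sq := (IsPullback.of_hasPullback f D.f).flip
    have := isIso_kernel_map_of_isPullback sq
    have hQ : IsSplitObj P (pullback f D.f) :=
      ih (pullback.snd f D.f) (hK.of_iso (asIso (kernel.map _ _ _ _ sq.w)).symm)
    exact .of_extension _ (hD.pullback_of_epi f) hQ hD₃ hDP

theorem of_shortExact {S : ShortComplex B} (hS : S.ShortExact) (h₁ : IsSplitObj P S.X₁)
    (h₃ : IsSplitObj P S.X₃) : IsSplitObj P S.X₂ :=
  have := hS.epi_g
  h₃.of_isSplitObj_kernel S.g
    (h₁.of_iso (hS.fIsKernel.conePointUniqueUpToIso (limit.isLimit _)))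

theorem of_epi {X : B} (hX : IsSplitObj P X) {Q : B} (p : X ⟶ Q) [Epi p] : IsSplitObj P Q := by
  induction hX generalizing Q with
  | of_isZero X hX =>
    have : Epi (0 : X ⟶ Q) := hX.eq_of_src p 0 ▸ ‹Epi p›
    exact .of_isZero Q (IsZero.of_epi_zero X Q)
  | of_extension S hS _ h₃ hP ih =>
    let c := cokernel.π (S.f ≫ p)
    have hker : IsSplitObj P (kernel c) := by
      let k := kernel.lift c (S.f ≫ p) (cokernel.condition _)
      have : Epi k := (ShortComplex.exact_iff_epi_kernel_lift _).1
        (ShortComplex.cokernelSequence_exact (S.f ≫ p))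
      exact ih k
    have hcoker : IsSplitObj P (cokernel (S.f ≫ p)) := by
      have := hS.epi_g
      have hw : S.f ≫ p ≫ c = 0 := by rw [← Category.assoc]; exact cokernel.condition _
      have : Epi (hS.exact.desc (p ≫ c) hw) := epi_of_epi_fac (hS.exact.g_desc _ _)
      exact of_epi_of_simple hP (hS.exact.desc (p ≫ c) hw)
    exact hcoker.of_isSplitObj_kernel c hker

/-- Peel off simple subobjects of quotients of `Z`, by Noetherian induction on their kernels
(and using that each quotient, being in `C`, is Artinian). -/
theorem of_prop (hsub : ∀ {X Y : B} (f : X ⟶ Y), Mono f → P Y → P X)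
    (hquot : ∀ {X Y : B} (f : X ⟶ Y), Epi f → P X → P Y)
    (hfinlen : ∀ X : B, P X → IsArtinianObject X ∧ IsNoetherianObject X)
    {Z : B} (hZ : P Z) : IsSplitObj P Z := by
  have := (hfinlen Z hZ).2
  suffices ∀ (K : Subobject Z) {Y : B} (q : Z ⟶ Y) [Epi q], kernelSubobject q = K →
      IsSplitObj P Y from this _ (𝟙 Z) rfl
  intro K
  induction K using WellFoundedGT.induction with
  | _ K ih =>
  rintro Y q hq rfl
  by_cases hY : IsZero Y
  · exact .of_isZero Y hY
  have hPY := hquot q hq hZ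
  have := (hfinlen Y hPY).1
  let s := simpleSubobjectArrow hY
  have hS : IsSplitObj P (simpleSubobject hY) := of_simple (hsub s inferInstance hPY)
  have hs : ¬ Mono (cokernel.π s) := fun _ => id_nonzero (simpleSubobject hY) <| by
    rw [← cancel_mono s, eq_zero_of_mono_cokernel s, comp_zero, comp_zero]
  have hQ : IsSplitObj P (cokernel s) :=
    ih _ (kernelSubobject_lt_comp_of_not_mono q hs) (q ≫ cokernel.π s) rfl
  exact of_shortExact (.mk' (ShortComplex.cokernelSequence_exact s) (inferInstanceAs (Mono s))
    (inferInstanceAs (Epi (cokernel.π s)))) hS hQ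

theorem map {D : Type*} [Category D] [Abelian D] {Q : D → Prop} (F : B ⥤ D)
    [PreservesFiniteColimits F] (hF : ∀ {X : B}, P X → IsSplitObj Q (F.obj X))
    {X : B} (hX : IsSplitObj P X) : IsSplitObj Q (F.obj X) := by
  induction hX with
  | of_isZero X h => exact .of_isZero _ (F.map_isZero h)
  | of_extension S hS _ _ hP ih =>
    have := hS.epi_g
    have hex : (S.map F).Exact :=
      hS.exact.map_of_epi_of_preservesCokernel F hS.epi_g inferInstance
    let k := kernel.lift (F.map S.g) (F.map S.f) (S.map F).zero
    have : Epi k := (ShortComplex.exact_iff_epi_kernel_lift _).1 hex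
    exact (hF hP).of_isSplitObj_kernel (F.map S.g) (ih.of_epi k)

end IsSplitObj

theorem IsSplitObj.tensor_general [CategoryTheory.Abelian B] [MonoidalCategory B]
    (hright : ∀ X : B, PreservesFiniteColimits (tensorLeft X))
    (hright' : ∀ X : B, PreservesFiniteColimits (tensorRight X))
    (P : B → Prop)
    (hsub : ∀ {X Y : B} (f : X ⟶ Y), Mono f → P Y → P X)
    (hquot : ∀ {X Y : B} (f : X ⟶ Y), Epi f → P X → P Y)
    (htensor : ∀ {X Y : B}, P X → P Y → P (X ⊗ Y))
    (hfinlen : ∀ X : B, P X → IsArtinianObject X ∧ IsNoetherianObject X)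
    (X Y : B) (hX : IsSplitObj P X) (hY : IsSplitObj P Y) :
    IsSplitObj P (X ⊗ Y) := by
  have := hright' Y
  refine IsSplitObj.map (tensorRight Y) (fun {V} hV => ?_) hX
  have := hright V
  exact IsSplitObj.map (tensorLeft V)
    (fun hW => IsSplitObj.of_prop hsub hquot hfinlen (htensor hV hW)) hY

/-- Let `B` be an abelian monoidal category whose tensor product is
right exact (preserves finite colimits) in each variable, and let `C` be a full
subcategory (given by its class of objects `P`) closed under isomorphisms,
subobjects, quotient objects and binary tensor products, all of whose objects have
finite length (are both Artinian and Noetherian objects) in `B`.  If `X` and `Y`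
belong to the splitting subcategory `B^split`, then so does `X ⊗ Y`; that is,
`B^split` is closed under tensor products and is a monoidal subcategory of `B`. -/
theorem IsSplitObj.tensor [CategoryTheory.Abelian B] [MonoidalCategory B]
    (hright : ∀ X : B, PreservesFiniteColimits (tensorLeft X))
    (hright' : ∀ X : B, PreservesFiniteColimits (tensorRight X))
    (P : B → Prop)
    (hiso : ∀ {X Y : B}, (X ≅ Y) → P X → P Y)
    (hsub : ∀ {X Y : B} (f : X ⟶ Y), Mono f → P Y → P X)
    (hquot : ∀ {X Y : B} (f : X ⟶ Y), Epi f → P X → P Y)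
    (htensor : ∀ {X Y : B}, P X → P Y → P (X ⊗ Y))
    (hfinlen : ∀ X : B, P X → IsArtinianObject X ∧ IsNoetherianObject X)
    (X Y : B) (hX : IsSplitObj P X) (hY : IsSplitObj P Y) :
    IsSplitObj P (X ⊗ Y) :=
  IsSplitObj.tensor_general hright hright' P hsub hquot htensor hfinlen X Y hX hY
end

section
/- Let A be a fix-point-free simple current extension in D. Then for every simple object X of D the free A-module A ⊗ X is a simple object of Mod_A: the only subobjects of A ⊗ X in the category Mod_A of A-module objects are 0 and A ⊗ X itself. -/
open CategoryTheory CategoryTheory.Limits MonoidalCategory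

attribute [local instance] CategoryTheory.Abelian.hasFiniteBiproducts

universe v u

variable {D : Type u} [Category.{v} D] [MonoidalCategory D]

/-- The free `A`-module object on an object `X`, namely `A ⊗ X` with the action
induced by the multiplication of `A`. -/
def Mod_.free (A : Mon D) (X : D) : Mod D A.X where
  X := A.X ⊗ X
  mod :=
  { smul := (α_ A.X A.X X).inv ≫ (MonObj.mul (X := A.X) ▷ X)
    one_smul := by
      change _ ▷ _ ≫ _ = (λ_ (A.X ⊗ X)).hom
      rw [associator_inv_naturality_left_assoc, ← comp_whiskerRight, MonObj.one_mul]
      monoidal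
    mul_smul := by
      change MonObj.mul (X := A.X) ▷ (A.X ⊗ X) ≫ ((α_ A.X A.X X).inv ≫ (MonObj.mul (X := A.X) ▷ X)) =
        (α_ A.X A.X (A.X ⊗ X)).hom ≫ A.X ◁ ((α_ A.X A.X X).inv ≫ (MonObj.mul (X := A.X) ▷ X)) ≫
          ((α_ A.X A.X X).inv ≫ (MonObj.mul (X := A.X) ▷ X))
      rw [associator_inv_naturality_left_assoc, ← comp_whiskerRight, MonObj.mul_assoc]
      simp only [comp_whiskerRight, MonoidalCategory.whiskerLeft_comp, Category.assoc]
      rw [associator_inv_naturality_middle_assoc]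
      monoidal }

open scoped MonObj

/-!
`A ⊗ X ≅ ⨁ᵢ Cᵢ ⊗ X` is a biproduct of simple objects, and fix-point-freeness makes them pairwise
non-isomorphic. Hence a nonzero submodule `N` of `A ⊗ X` contains a whole summand `Cⱼ ⊗ X`.
The action of `C_{i-j} ⊆ A` on `N` carries this summand isomorphically onto `Cᵢ ⊗ X`, since the
component `C_{i-j} ⊗ Cⱼ → Cᵢ` of the multiplication is a nonzero map between simple objects; so
`N` contains every summand and is all of `A ⊗ X`.
-/

namespace CategoryTheory.Limits

variable {𝒞 : Type*} [Category 𝒞] [Preadditive 𝒞] {J : Type}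
  {S : J → 𝒞} [HasBiproduct S]

lemma exists_comp_eq_ι_of_not_mono_comp_sub [HasKernels 𝒞] {N : 𝒞} (f : N ⟶ ⨁ S) [Mono f]
    (j : J) [Simple (S j)]
    (h : ¬ Mono (f ≫ (𝟙 _ - biproduct.π S j ≫ biproduct.ι S j))) :
    ∃ u : S j ⟶ N, u ≫ f = biproduct.ι S j := by
  set κ := kernel.ι (f ≫ (𝟙 _ - biproduct.π S j ≫ biproduct.ι S j))
  have hκ : κ ≠ 0 := fun h0 => h (Preadditive.mono_of_kernel_zero h0)
  have hfac : κ ≫ f = (κ ≫ f ≫ biproduct.π S j) ≫ biproduct.ι S j := by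
    have := kernel.condition (f ≫ (𝟙 _ - biproduct.π S j ≫ biproduct.ι S j))
    simp only [Preadditive.comp_sub, Category.comp_id, sub_eq_zero] at this
    simpa using this
  have : Mono (κ ≫ f ≫ biproduct.π S j) := by
    have : Mono ((κ ≫ f ≫ biproduct.π S j) ≫ biproduct.ι S j) := hfac ▸ mono_comp κ f
    exact mono_of_mono _ (biproduct.ι S j)
  have : IsIso (κ ≫ f ≫ biproduct.π S j) := isIso_of_mono_of_nonzero fun h0 =>
    hκ (zero_of_comp_mono f (by rw [hfac, h0, zero_comp]))
  exact ⟨inv (κ ≫ f ≫ biproduct.π S j) ≫ κ, by rw [Category.assoc, hfac, IsIso.inv_hom_id_assoc]⟩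

lemma exists_comp_eq_ι_of_mono [HasKernels 𝒞] [Fintype J] [∀ j, Simple (S j)]
    (horth : ∀ i j, i ≠ j → ∀ φ : S i ⟶ S j, φ = 0) {N : 𝒞} (f : N ⟶ ⨁ S) [Mono f]
    (hN : ¬ IsZero N) : ∃ j, ∃ u : S j ⟶ N, u ≫ f = biproduct.ι S j := by
  classical
  -- Induction on a finset containing the support of `f`: either `f` stays mono after the `j`-th
  -- coordinate is killed, or the kernel of that composite is a nonzero subobject of `S j`.
  suffices ∀ (s : Finset J) {N : 𝒞} (f : N ⟶ ⨁ S) [Mono f], ¬ IsZero N →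
      (∀ k ∉ s, f ≫ biproduct.π S k = 0) → ∃ j, ∃ u : S j ⟶ N, u ≫ f = biproduct.ι S j from
    this Finset.univ f hN (by simp)
  intro s
  induction s using Finset.induction_on with
  | empty =>
    intro N f _ hN hf
    have : f = 0 := biproduct.hom_ext _ _ fun k => by simpa using hf k
    exact absurd (IsZero.of_mono_eq_zero f this) hN
  | insert j s _ ih =>
    intro N f _ hN hf
    by_cases hmono : Mono (f ≫ (𝟙 _ - biproduct.π S j ≫ biproduct.ι S j))
    swap
    · exact ⟨j, exists_comp_eq_ι_of_not_mono_comp_sub f j hmono⟩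
    have hq (k : J) : (𝟙 _ - biproduct.π S j ≫ biproduct.ι S j) ≫ biproduct.π S k =
        if k = j then 0 else biproduct.π S k := by
      split_ifs with hk
      · subst hk; simp
      · simp [biproduct.ι_π_ne S (Ne.symm hk)]
    obtain ⟨j', u, hu⟩ := ih (f ≫ (𝟙 _ - biproduct.π S j ≫ biproduct.ι S j)) hN fun k hk => by
      by_cases hkj : k = j
      · rw [Category.assoc, hq, if_pos hkj, comp_zero]
      · rw [Category.assoc, hq, if_neg hkj]
        exact hf k (by simp [hkj, hk])
    have huπ (k : J) :
        u ≫ f ≫ (if k = j then 0 else biproduct.π S k) = biproduct.ι S j' ≫ biproduct.π S k := by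
      rw [← hq, ← hu]
      simp only [Category.assoc]
    have hj' : j' ≠ j := by
      rintro rfl
      exact id_nonzero (S j') (by simpa using (huπ j').symm)
    refine ⟨j', u, biproduct.hom_ext _ _ fun k => ?_⟩
    by_cases hkj : k = j
    · subst hkj
      rw [biproduct.ι_π_ne S hj', Category.assoc]
      exact horth _ _ hj' _
    · simpa [hkj] using huπ k

lemma isIso_of_forall_exists_comp_eq_ι [Fintype J] {N : 𝒞} (f : N ⟶ ⨁ S) [Mono f]
    (h : ∀ j, ∃ u : S j ⟶ N, u ≫ f = biproduct.ι S j) : IsIso f := by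
  choose u hu using h
  have : IsSplitEpi f := .mk' ⟨∑ j, biproduct.π S j ≫ u j, by
    simpa only [Preadditive.sum_comp, Category.assoc, hu] using
      (biproduct.total : ∑ j, biproduct.π S j ≫ biproduct.ι S j = 𝟙 (⨁ S))⟩
  exact isIso_of_mono_of_isSplitEpi f

end CategoryTheory.Limits

def IsTensorInvertible (U : D) : Prop :=
  ∃ U' : D, Nonempty (U ⊗ U' ≅ 𝟙_ D) ∧ Nonempty (U' ⊗ U ≅ 𝟙_ D)

def tensorLeftEquivOfIso {U U' : D} (h : U ⊗ U' ≅ 𝟙_ D) (h' : U' ⊗ U ≅ 𝟙_ D) : D ≌ D :=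
  .mk (tensorLeft U) (tensorLeft U')
    ((leftUnitorNatIso D).symm ≪≫ (curriedTensor D).mapIso h'.symm ≪≫ tensorLeftTensor U' U)
    ((tensorLeftTensor U U').symm ≪≫ (curriedTensor D).mapIso h ≪≫ leftUnitorNatIso D)

lemma IsTensorInvertible.simple_tensor [HasZeroMorphisms D] {U : D} (hU : IsTensorInvertible U)
    (Z : D) [Simple Z] : Simple (U ⊗ Z) :=
  let ⟨_, ⟨h⟩, ⟨h'⟩⟩ := hU
  simple_obj (tensorLeftEquivOfIso h h').functor Z

lemma IsTensorInvertible.simple [HasZeroMorphisms D] [Simple (𝟙_ D)] {U : D}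
    (hU : IsTensorInvertible U) : Simple U :=
  have := hU.simple_tensor (𝟙_ D)
  Simple.of_iso (ρ_ U).symm

namespace Mod_

variable {A : Mon D}

def freeLift {N : Mod D A.X} {W : D} (a : W ⟶ N.X) : free A W ⟶ N :=
  Mod.Hom.mk' (A.X ◁ a ≫ γ[A.X, N.X]) (by
    change ((α_ A.X A.X W).inv ≫ (μ[A.X] ▷ W)) ≫ A.X ◁ a ≫ γ[A.X, N.X] =
      A.X ◁ (A.X ◁ a ≫ γ[A.X, N.X]) ≫ γ[A.X, N.X]
    rw [Category.assoc, ← whisker_exchange_assoc]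
    simp)

lemma freeLift_hom {N : Mod D A.X} {W : D} (a : W ⟶ N.X) :
    (freeLift a).hom = A.X ◁ a ≫ γ[A.X, N.X] :=
  rfl

lemma unit_comp_freeLift_hom {N : Mod D A.X} {W : D} (a : W ⟶ N.X) :
    (λ_ W).inv ≫ η[A.X] ▷ W ≫ (freeLift a).hom = a := by
  rw [freeLift_hom, ← whisker_exchange_assoc]
  simp

instance mono_hom {N P : Mod D A.X} (f : N ⟶ P) [Mono f] : Mono f.hom where
  right_cancellation a b hab := by
    have : freeLift a ≫ f = freeLift b ≫ f := by
      have hf : γ[A.X, N.X] ≫ f.hom = A.X ◁ f.hom ≫ γ[A.X, P.X] := IsModHom.smul_hom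
      ext
      change (A.X ◁ a ≫ γ[A.X, N.X]) ≫ f.hom = (A.X ◁ b ≫ γ[A.X, N.X]) ≫ f.hom
      simp only [Category.assoc, hf, ← whiskerLeft_comp_assoc, hab]
    rw [← unit_comp_freeLift_hom a, ← unit_comp_freeLift_hom b, cancel_mono f |>.mp this]

lemma smul_comp_hom_free {X P Q : D} {N : Mod D A.X} (f : N ⟶ free A X)
    (p : P ⟶ A.X) (q : Q ⟶ A.X) (u : Q ⊗ X ⟶ N.X) (hu : u ≫ f.hom = q ▷ X) :
    (P ◁ u ≫ p ▷ N.X ≫ γ[A.X, N.X]) ≫ f.hom = (α_ P Q X).inv ≫ ((p ⊗ₘ q) ≫ μ[A.X]) ▷ X := by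
  dsimp only [Mod_.free] at f hu ⊢
  have hf : γ[A.X, N.X] ≫ f.hom = A.X ◁ f.hom ≫ (α_ A.X A.X X).inv ≫ μ[A.X] ▷ X :=
    f.isModHom.smul_hom
  rw [Category.assoc, Category.assoc, hf, ← whisker_exchange_assoc, ← whiskerLeft_comp_assoc, hu]
  simp only [MonoidalCategory.tensorHom_def, comp_whiskerRight, Category.assoc]
  rw [whisker_exchange_assoc, associator_inv_naturality_middle_assoc,
    associator_inv_naturality_left_assoc]

end Mod_

namespace CategoryTheory.Mod

variable {M : D} [MonObj M]

lemma isIso_of_isIso_hom {N P : Mod D M} (f : N ⟶ P) [IsIso f.hom] : IsIso f :=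
  have : IsModHom M (asIso f.hom).hom := f.isModHom
  ⟨Mod.Hom.mk (asIso f.hom).inv, by ext; simp, by ext; simp⟩

lemma isZero_of_isZero_X [HasZeroMorphisms D] [(tensorLeft M).PreservesZeroMorphisms]
    {N : Mod D M} (h : IsZero N.X) : IsZero N := by
  have zero_isModHom (P Q : Mod D M) : γ[M, P.X] ≫ (0 : P.X ⟶ Q.X) = M ◁ 0 ≫ γ[M, Q.X] := by
    rw [comp_zero, show M ◁ (0 : P.X ⟶ Q.X) = 0 from (tensorLeft M).map_zero _ _, zero_comp]
  refine ⟨fun P => ⟨⟨⟨Hom.mk' 0 (zero_isModHom N P)⟩, fun g => ?_⟩⟩,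
    fun P => ⟨⟨⟨Hom.mk' 0 (zero_isModHom P N)⟩, fun g => ?_⟩⟩⟩
  · ext; exact h.eq_of_src _ _
  · ext; exact h.eq_of_tgt _ _

end CategoryTheory.Mod

section SimpleCurrent

variable [Abelian D] {I : Type} [AddCommGroup I] [Fintype I]

noncomputable def mulComponent (A : Mon D) (C : I → D) (e : A.X ≅ ⨁ C) (a b k : I) :
    C a ⊗ C b ⟶ C k :=
  ((biproduct.ι C a ≫ e.inv) ⊗ₘ (biproduct.ι C b ≫ e.inv)) ≫ μ[A.X] ≫ e.hom ≫ biproduct.π C k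

structure IsFixpointFreeSimpleCurrent (A : Mon D) (C : I → D) (e : A.X ≅ ⨁ C) : Prop where
  unit : Nonempty (C 0 ≅ 𝟙_ D)
  invertible (i : I) : IsTensorInvertible (C i)
  mulComponent_ne_zero (i j : I) : mulComponent A C e i j (i + j) ≠ 0
  fixpointFree (i : I) : i ≠ 0 → ∀ Y : D, Simple Y → IsEmpty (C i ⊗ Y ≅ Y)

namespace IsFixpointFreeSimpleCurrent

variable [Simple (𝟙_ D)] {A : Mon D} {C : I → D} {e : A.X ≅ ⨁ C}

lemma simple (h : IsFixpointFreeSimpleCurrent A C e) (i : I) : Simple (C i) :=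
  (h.invertible i).simple

lemma isIso_mulComponent (h : IsFixpointFreeSimpleCurrent A C e) {a b k : I} (hk : a + b = k) :
    IsIso (mulComponent A C e a b k) := by
  subst hk
  have := h.simple b
  have := (h.invertible a).simple_tensor (C b)
  have := h.simple (a + b)
  exact isIso_of_hom_simple (h.mulComponent_ne_zero a b)

lemma isEmpty_tensor_iso_of_ne (h : IsFixpointFreeSimpleCurrent A C e) {i j : I} (hij : i ≠ j)
    (Y : D) [Simple Y] : IsEmpty (C i ⊗ Y ≅ C j ⊗ Y) := by
  -- Tensoring with `C (-i)` turns such an isomorphism into a fixed point `C (-i + j) ⊗ Y ≅ Y`.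
  refine ⟨fun φ => (h.fixpointFree (-i + j) ?_ Y inferInstance).false ?_⟩
  · rwa [neg_add_eq_zero.ne]
  have := h.isIso_mulComponent (neg_add_cancel i)
  have := h.isIso_mulComponent (rfl : -i + j = -i + j)
  exact whiskerRightIso (asIso (mulComponent A C e (-i) j (-i + j))).symm Y ≪≫ α_ _ _ _ ≪≫
    whiskerLeftIso (C (-i)) φ.symm ≪≫ (α_ _ _ _).symm ≪≫
    whiskerRightIso (asIso (mulComponent A C e (-i) i 0) ≪≫ h.unit.some) Y ≪≫ λ_ Y

lemma hom_eq_zero_of_ne (h : IsFixpointFreeSimpleCurrent A C e) {i j : I} (hij : i ≠ j)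
    (Y : D) [Simple Y] (φ : C i ⊗ Y ⟶ C j ⊗ Y) : φ = 0 := by
  by_contra hφ
  have := (h.invertible i).simple_tensor Y
  have := (h.invertible j).simple_tensor Y
  have := isIso_of_hom_simple hφ
  exact (h.isEmpty_tensor_iso_of_ne hij Y).false (asIso φ)

lemma mulComponent_eq_zero (h : IsFixpointFreeSimpleCurrent A C e) {a b k : I} (hk : a + b ≠ k) :
    mulComponent A C e a b k = 0 := by
  by_contra hne
  have := h.isIso_mulComponent (rfl : a + b = a + b)
  have := h.simple b
  have := (h.invertible a).simple_tensor (C b)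
  have := h.simple k
  have := isIso_of_hom_simple hne
  exact (h.isEmpty_tensor_iso_of_ne hk (𝟙_ D)).false <| whiskerRightIso
    ((asIso (mulComponent A C e a b (a + b))).symm ≪≫ asIso (mulComponent A C e a b k)) (𝟙_ D)

lemma tensorHom_comp_mul (h : IsFixpointFreeSimpleCurrent A C e) (a b : I) :
    ((biproduct.ι C a ≫ e.inv) ⊗ₘ (biproduct.ι C b ≫ e.inv)) ≫ μ[A.X] =
      mulComponent A C e a b (a + b) ≫ biproduct.ι C (a + b) ≫ e.inv := by
  rw [← cancel_mono e.hom]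
  refine biproduct.hom_ext _ _ fun k => ?_
  by_cases hk : a + b = k
  · subst hk
    simp [mulComponent]
  · simpa [biproduct.ι_π_ne C hk, mulComponent] using h.mulComponent_eq_zero hk

lemma exists_comp_hom_eq_whiskerRight_ι (h : IsFixpointFreeSimpleCurrent A C e) {X : D}
    {N : Mod D A.X} (f : N ⟶ Mod_.free A X) {j : I} (u : C j ⊗ X ⟶ N.X)
    (hu : u ≫ f.hom = (biproduct.ι C j ≫ e.inv) ▷ X) (a : I) :
    ∃ v : C (a + j) ⊗ X ⟶ N.X, v ≫ f.hom = (biproduct.ι C (a + j) ≫ e.inv) ▷ X := by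
  -- Let `C a ⊆ A` act on `u`, then undo the isomorphism `C a ⊗ C j ≅ C (a + j)`.
  dsimp only [Mod_.free] at f hu ⊢
  obtain ⟨t, ht⟩ : ∃ t : C a ⊗ C j ⊗ X ⟶ N.X, t ≫ f.hom = (α_ _ _ _).inv ≫
      (mulComponent A C e a j (a + j) ≫ biproduct.ι C (a + j) ≫ e.inv) ▷ X :=
    ⟨_, h.tensorHom_comp_mul a j ▸ Mod_.smul_comp_hom_free f (biproduct.ι C a ≫ e.inv) _ u hu⟩
  have := h.isIso_mulComponent (rfl : a + j = a + j)
  refine ⟨inv ((α_ _ _ _).inv ≫ mulComponent A C e a j (a + j) ▷ X) ≫ t, ?_⟩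
  rw [Category.assoc, ht]
  simp

lemma isIso_hom_of_mono [∀ X : D, (tensorRight X).Additive]
    (h : IsFixpointFreeSimpleCurrent A C e) (X : D) [Simple X] {N : Mod D A.X}
    (f : N ⟶ Mod_.free A X) [Mono f.hom] (hN : ¬ IsZero N.X) : IsIso f.hom := by
  let e' : (Mod_.free A X).X ≅ ⨁ fun i => C i ⊗ X :=
    (tensorRight X).mapIso e ≪≫ (tensorRight X).mapBiproduct C
  have he' (i : I) : biproduct.ι _ i ≫ e'.inv = (biproduct.ι C i ≫ e.inv) ▷ X := by
    change biproduct.ι _ i ≫ ((tensorRight X).mapBiproduct C).inv ≫ e.inv ▷ X =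
      (biproduct.ι C i ≫ e.inv) ▷ X
    rw [Functor.mapBiproduct_inv, biproduct.ι_desc_assoc]
    simp
  have hcomp (i : I) (u : C i ⊗ X ⟶ N.X) :
      u ≫ f.hom ≫ e'.hom = biproduct.ι (fun i => C i ⊗ X) i ↔
        u ≫ f.hom = (biproduct.ι C i ≫ e.inv) ▷ X := by
    rw [← he', Iso.eq_comp_inv, Category.assoc]
  have (i : I) : Simple (C i ⊗ X) := (h.invertible i).simple_tensor X
  obtain ⟨j, u, hu⟩ := exists_comp_eq_ι_of_mono (fun _ _ hij => h.hom_eq_zero_of_ne hij X)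
    (f.hom ≫ e'.hom) hN
  have : IsIso (f.hom ≫ e'.hom) := by
    refine isIso_of_forall_exists_comp_eq_ι _ fun i => ?_
    obtain ⟨v, hv⟩ := sub_add_cancel i j ▸
      h.exists_comp_hom_eq_whiskerRight_ι f u ((hcomp j u).mp hu) (i - j)
    exact ⟨v, (hcomp i v).mpr hv⟩
  exact IsIso.of_isIso_comp_right _ e'.hom

end IsFixpointFreeSimpleCurrent

end SimpleCurrent

/-- Let `D` be an abelian braided monoidal category with tensor
product additive in each variable and simple unit object, and let
`A = ⊕_{i∈I} C_i` be a fix-point-free simple current extension in `D`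
(a commutative monoid object whose underlying object is a finite biproduct of
invertible objects `C_i` indexed by a finite abelian group `I`, with `C_0 ≅ 1`,
all components `C_i ⊗ C_j → C_{i+j}` of the multiplication nonzero, and
`C_i ⊗ X ≇ X` for every simple `X` and every `i ≠ 0`).  Then for every simple
object `X` of `D` the free `A`-module `A ⊗ X` is a simple object of `Mod_A`:
its only subobjects in `Mod_A` are `0` and `A ⊗ X` itself. -/
theorem free_module_simple_of_fixpoint_free_simple_current_extension
    [Abelian D] [BraidedCategory D]
    [∀ X : D, (tensorLeft X).Additive] [∀ X : D, (tensorRight X).Additive]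
    [Simple (𝟙_ D)]
    {I : Type} [AddCommGroup I] [Fintype I]
    (A : Mon D)
    (hcomm : (β_ A.X A.X).hom ≫ MonObj.mul (X := A.X) = MonObj.mul (X := A.X))
    (C : I → D) (e : A.X ≅ ⨁ C)
    (h0 : Nonempty (C 0 ≅ 𝟙_ D))
    (hinv : ∀ i : I, ∃ C' : D,
      Nonempty (C i ⊗ C' ≅ 𝟙_ D) ∧ Nonempty (C' ⊗ C i ≅ 𝟙_ D))
    (hmulne : ∀ i j : I,
      ((biproduct.ι C i ≫ e.inv) ⊗ₘ (biproduct.ι C j ≫ e.inv)) ≫ MonObj.mul (X := A.X) ≫ e.hom ≫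
          biproduct.π C (i + j) ≠ 0)
    (hfpf : ∀ i : I, i ≠ 0 → ∀ X : D, Simple X → IsEmpty (C i ⊗ X ≅ X))
    (X : D) [Simple X]
    (N : Mod D A.X) (f : N ⟶ Mod_.free A X) (hf : Mono f) :
    IsZero N ∨ IsIso f := by
  have h : IsFixpointFreeSimpleCurrent A C e := ⟨h0, hinv, hmulne, hfpf⟩
  by_cases hN : IsZero N.X
  · exact .inl (Mod.isZero_of_isZero_X hN)
  · have := h.isIso_hom_of_mono X f hN
    exact .inr (Mod.isIso_of_isIso_hom f)
end

section
/- Let S₁, …, S_n be pairwise non-isomorphic simple objects of A and let X = S₁ ⊕ ⋯ ⊕ S_n be their biproduct. Then every subobject of X equals, as a subobject of X, the canonical subobject ⊕_{i∈J} S_i for some subset J ⊆ {1, …, n}; in particular, every nonzero subobject of X contains one of the canonical simple summands S_i. -/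
/-!
A mono `f : P ⟶ ⨁ S` all of whose components `P ⟶ S i` are epi is an isomorphism. Indeed, the
kernel of the `j`-th component embeds in `⨁_{i ≠ j} S i`, again with epi components: a component
vanishing on that kernel would factor through `S j`, making `S j ≅ S i`. By induction the kernel is
all of `⨁_{i ≠ j} S i`, and this forces `f` to be epi. In general `f` factors through the sum of
those `S i` on which its component is nonzero, and there all components are epi.
-/

open CategoryTheory CategoryTheory.Limits

attribute [local instance] CategoryTheory.Abelian.hasFiniteBiproducts

namespace CategoryTheory.Limits.biproduct

variable {C : Type*} [Category C] [Preadditive C] {J : Type} (S : J → C) [HasBiproduct S]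

theorem comp_toSubtype_comp_fromSubtype (p : J → Prop) [HasBiproduct (Subtype.restrict p S)]
    {P : C} (f : P ⟶ ⨁ S) (hf : ∀ i, ¬ p i → f ≫ π S i = 0) :
    f ≫ toSubtype S p ≫ fromSubtype S p = f := by
  classical
  ext i
  by_cases hi : p i <;> simp [hi, hf]

theorem eq_π_comp_ι_comp_of_fromSubtype_comp_eq_zero (j : J)
    [HasBiproduct (Subtype.restrict (· ≠ j) S)] {Z : C} (c : ⨁ S ⟶ Z)
    (hc : fromSubtype S (· ≠ j) ≫ c = 0) : c = π S j ≫ ι S j ≫ c := by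
  classical
  ext i
  by_cases hij : i = j
  · subst hij
    simp
  · have hi : ι S i ≫ c = 0 := by
      have := ι_fromSubtype_assoc S (· ≠ j) ⟨i, hij⟩ c
      rw [hc, comp_zero] at this
      exact this.symm
    simp [hi, ι_π_ne_assoc S hij]

end CategoryTheory.Limits.biproduct

section

variable {A : Type*} [Category A] [Abelian A]

instance Subtype.restrict.simple {J : Type} (S : J → A) [∀ i, Simple (S i)] (p : J → Prop)
    (j : Subtype p) : Simple (Subtype.restrict p S j) :=
  inferInstanceAs (Simple (S j.1))

theorem epi_kernel_ι_comp_of_isEmpty_iso {P X Y : A} [Simple X] [Simple Y] (p : P ⟶ X) [Epi p]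
    (g : P ⟶ Y) [Epi g] (hXY : IsEmpty (X ≅ Y)) : Epi (kernel.ι p ≫ g) := by
  refine epi_of_nonzero_to_simple fun hg => hXY.false ?_
  let w := Abelian.epiDesc p g hg
  have hpw : p ≫ w = g := Abelian.comp_epiDesc p g hg
  have : Epi w := epi_of_epi_fac hpw
  have hw : w ≠ 0 := by
    intro hw
    have : Epi (0 : P ⟶ Y) := by rwa [← comp_zero (f := p), ← hw, hpw]
    exact Simple.not_isZero Y (IsZero.of_epi_zero P Y)
  have : IsIso w := isIso_of_epi_of_nonzero hw
  exact asIso w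

theorem isIso_of_mono_of_forall_epi_comp_π {J : Type} [Finite J] (S : J → A)
    [∀ i, Simple (S i)] (hS : Pairwise fun i j => IsEmpty (S i ≅ S j)) {P : A} (f : P ⟶ ⨁ S)
    [Mono f] (hf : ∀ i, Epi (f ≫ biproduct.π S i)) : IsIso f := by
  induction hn : Nat.card J using Nat.strong_induction_on generalizing J P with
  | _ n ih =>
  suffices Epi f from isIso_of_mono_of_epi f
  refine Preadditive.epi_of_cancel_zero f fun c hc => biproduct.hom_ext' _ _ fun j => ?_
  rw [comp_zero]
  set p := f ≫ biproduct.π S j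
  have : Epi p := hf j
  set ψ := (kernel.ι p ≫ f) ≫ biproduct.toSubtype S (· ≠ j)
  have hψ : ψ ≫ biproduct.fromSubtype S (· ≠ j) = kernel.ι p ≫ f := by
    rw [Category.assoc]
    refine biproduct.comp_toSubtype_comp_fromSubtype S (· ≠ j) _ fun i hi => ?_
    rw [not_not.mp hi, Category.assoc]
    exact kernel.condition p
  have : Mono ψ := mono_of_mono_fac hψ
  have : IsIso ψ := by
    have hlt : Nat.card {i // i ≠ j} < n := hn ▸ Finite.card_subtype_lt (x := j) (by simp)
    refine ih _ hlt (Subtype.restrict (· ≠ j) S) (hS.comp_of_injective Subtype.val_injective) ψ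
      (fun i => ?_) rfl
    rw [Category.assoc, Category.assoc, biproduct.toSubtype_π]
    have : Epi (f ≫ biproduct.π S i.1) := hf i.1
    exact epi_kernel_ι_comp_of_isEmpty_iso p (f ≫ biproduct.π S i.1) (hS (Ne.symm i.2))
  have hc' : biproduct.fromSubtype S (· ≠ j) ≫ c = 0 := by
    rw [← IsIso.inv_hom_id_assoc ψ (biproduct.fromSubtype S _), hψ]
    simp [hc]
  rw [← cancel_epi p, comp_zero]
  calc p ≫ biproduct.ι S j ≫ c = f ≫ biproduct.π S j ≫ biproduct.ι S j ≫ c := by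
        simp only [p, Category.assoc]
    _ = 0 := by rw [← biproduct.eq_π_comp_ι_comp_of_fromSubtype_comp_eq_zero S j c hc', hc]

theorem exists_iso_biproduct_restrict_comp_eq_fromSubtype {J : Type} [Finite J] (S : J → A)
    [∀ i, Simple (S i)] (hS : Pairwise fun i j => IsEmpty (S i ≅ S j)) {P : A} (f : P ⟶ ⨁ S)
    [Mono f] : ∃ (K : Set J) (g : (⨁ Subtype.restrict (· ∈ K) S) ≅ P),
      g.hom ≫ f = biproduct.fromSubtype S (· ∈ K) := by
  let K : Set J := {i | f ≫ biproduct.π S i ≠ 0}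
  let ψ := f ≫ biproduct.toSubtype S (· ∈ K)
  have hψ : ψ ≫ biproduct.fromSubtype S (· ∈ K) = f := by
    rw [Category.assoc]
    exact biproduct.comp_toSubtype_comp_fromSubtype S _ f fun i hi => not_not.mp hi
  have : Mono ψ := mono_of_mono_fac hψ
  have : IsIso ψ := by
    refine isIso_of_mono_of_forall_epi_comp_π (Subtype.restrict (· ∈ K) S)
      (hS.comp_of_injective Subtype.val_injective) ψ fun i => ?_
    rw [Category.assoc, biproduct.toSubtype_π]
    exact epi_of_nonzero_to_simple i.2
  exact ⟨K, (asIso ψ).symm, by rw [Iso.symm_hom, asIso_inv, IsIso.inv_comp_eq, hψ]⟩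

end

/-- Let `S₁, …, S_n` be pairwise non-isomorphic simple objects of an
abelian category `A` and let `X = S₁ ⊕ ⋯ ⊕ S_n` be their biproduct.  Then every
subobject of `X` (presented by a monomorphism `f : P ⟶ X`) equals, as a subobject of
`X`, the canonical subobject `⊕_{i∈J} S_i` for some subset `J ⊆ {1, …, n}`
(i.e. there is an isomorphism `g` from `⨁_{i ∈ J} S_i` to `P` with
`g.hom ≫ f = biproduct.fromSubtype`); in particular, every nonzero subobject of `X`
contains one of the canonical simple summands `S_i`. -/
theorem subobject_of_biproduct_of_pairwise_nonisomorphic_simples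
    {A : Type*} [Category A] [Abelian A]
    (n : ℕ) (S : Fin n → A) [∀ i, Simple (S i)]
    (hpair : ∀ i j : Fin n, i ≠ j → IsEmpty (S i ≅ S j))
    (P : A) (f : P ⟶ ⨁ S) [Mono f] :
    (∃ (J : Set (Fin n)) (g : (⨁ Subtype.restrict (· ∈ J) S) ≅ P),
        g.hom ≫ f = biproduct.fromSubtype S (· ∈ J)) ∧
      (¬ IsZero P → ∃ (i : Fin n) (h : S i ⟶ P), h ≫ f = biproduct.ι S i) := by
  obtain ⟨J, g, hg⟩ := exists_iso_biproduct_restrict_comp_eq_fromSubtype S hpair f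
  refine ⟨⟨J, g, hg⟩, fun hP => ?_⟩
  obtain ⟨i, hi⟩ : J.Nonempty := by
    by_contra! hJ
    refine hP (IsZero.of_iso ?_ g.symm)
    exact (IsZero.iff_id_eq_zero _).mpr (biproduct.hom_ext _ _ fun i => (hJ.subset i.2).elim)
  refine ⟨i, biproduct.ι (Subtype.restrict (· ∈ J) S) ⟨i, hi⟩ ≫ g.hom, ?_⟩
  exact (Category.assoc _ _ _).trans ((congrArg _ hg).trans (biproduct.ι_fromSubtype _ _ _))
end

section
/- Let σ : I × I → ℂˣ be a bicharacter with σ(i, i) = 1 for all i ∈ I. Then there exists a 2-cocycle ε : I × I → ℂˣ such that ε(i, j)·ε(j, i)⁻¹ = σ(i, j) for all i, j ∈ I. -/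
/-!
A bicharacter is a 2-cocycle, so it suffices to find a bicharacter `ε` with
`ε x y * (ε y x)⁻¹ = σ x y`.

If the identity of `I` is a finite sum of endomorphisms `pᵢ` with cyclic images (by the structure
theorem, this holds for finitely generated `I`), order the indices and take
`ε x y = ∏_{i < j} σ (pᵢ x) (pⱼ y)`: expanding `σ x y = ∏_{i,j} σ (pᵢ x) (pⱼ y)`, the terms with
`i > j` form `(ε y x)⁻¹` because `σ` is alternating, and the diagonal terms vanish because an
alternating bicharacter is trivial on a cyclic group.
For a compact Hausdorff target the solutions on finitely generated subgroups glue, by the finite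
intersection property of the closed conditions in `I → I → D`. For `ℂˣ`, split
`σ = √|σ|² · (σ / |σ|)`: the phase is circle-valued, and the alternating bicharacter `√|σ|`
is its own commutator up to the square.
-/

open Finset

lemma AddMonoidHom.exists_range_comp_le_zmultiples {G H C : Type*} [AddGroup G] [AddGroup H]
    [AddGroup C] [IsAddCyclic C] (f : C →+ G) (g : H →+ C) :
    ∃ a, (f.comp g).range ≤ AddSubgroup.zmultiples a := by
  obtain ⟨c, hc⟩ := IsAddCyclic.exists_generator (α := C)
  refine ⟨f c, ?_⟩
  rintro _ ⟨x, rfl⟩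
  obtain ⟨n, hn⟩ := AddSubgroup.mem_zmultiples_iff.mp (hc (g x))
  exact ⟨n, by simp [← hn]⟩

theorem AddCommGroup.exists_sum_eq_id_range_le_zmultiples (G : Type*) [AddCommGroup G]
    [AddGroup.FG G] :
    ∃ (ι : Type) (_ : Fintype ι) (p : ι → G →+ G), ∑ i, p i = AddMonoidHom.id G ∧
      ∀ i, ∃ g, (p i).range ≤ AddSubgroup.zmultiples g := by
  classical
  obtain ⟨n, ι, _, q, -, e, ⟨f⟩⟩ := AddCommGroup.equiv_free_prod_directSum_zmod G
  let free (k : Fin n) : ℤ →+ G :=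
    f.symm.toAddMonoidHom.comp ((AddMonoidHom.inl _ _).comp (Finsupp.singleAddHom k))
  let torsion (i : ι) : ZMod (q i ^ e i) →+ G :=
    f.symm.toAddMonoidHom.comp
      ((AddMonoidHom.inr _ _).comp (DirectSum.of (fun i => ZMod (q i ^ e i)) i))
  let p : Fin n ⊕ ι → G →+ G := Sum.elim
    (fun k => (free k).comp ((Finsupp.applyAddHom k).comp
      ((AddMonoidHom.fst _ _).comp f.toAddMonoidHom)))
    (fun i => (torsion i).comp
      ((DirectSum.component ℤ ι (fun i => ZMod (q i ^ e i)) i).toAddMonoidHom.comp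
        ((AddMonoidHom.snd _ _).comp f.toAddMonoidHom)))
  refine ⟨Fin n ⊕ ι, inferInstance, p, ?_, ?_⟩
  · ext x
    simp only [AddEquiv.toAddMonoidHom_eq_coe, Fintype.sum_sum_type, Sum.elim_inl, Sum.elim_inr,
      AddMonoidHom.add_apply, AddMonoidHom.finsetSum_apply, AddMonoidHom.coe_comp,
      AddMonoidHom.coe_coe, AddMonoidHom.coe_fst, Function.comp_apply, Finsupp.applyAddHom_apply,
      Finsupp.singleAddHom_apply, AddMonoidHom.inl_apply, LinearMap.toAddMonoidHom_coe,
      AddMonoidHom.coe_snd, AddMonoidHom.inr_apply, AddMonoidHom.id_apply, p, free, torsion]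
    rw [← map_sum, ← map_sum, ← map_add, AddEquiv.symm_apply_eq]
    ext1 <;>
      simp [Prod.fst_sum, Prod.snd_sum, ← DirectSum.apply_eq_component, DirectSum.sum_univ_of]
  · rintro (k | i)
    · exact (free k).exists_range_comp_le_zmultiples _
    · exact (torsion i).exists_range_comp_le_zmultiples _

structure IsBicharacter {I D : Type*} [Add I] [Mul D] (σ : I → I → D) : Prop where
  map_add_left : ∀ i j l, σ (i + j) l = σ i l * σ j l
  map_add_right : ∀ i j l, σ i (j + l) = σ i j * σ i l

namespace IsBicharacter

variable {I J D E : Type*} [AddCommGroup I] [CommGroup D] {σ : I → I → D}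

lemma comp_addMonoidHom [AddCommGroup J] (hσ : IsBicharacter σ) (f : J →+ I) :
    IsBicharacter fun a b => σ (f a) (f b) :=
  ⟨fun a b c => by simp only [map_add, hσ.map_add_left],
    fun a b c => by simp only [map_add, hσ.map_add_right]⟩

lemma comp_monoidHom [CommGroup E] (hσ : IsBicharacter σ) (f : D →* E) :
    IsBicharacter fun x y => f (σ x y) :=
  ⟨fun a b c => by simp only [hσ.map_add_left, map_mul],
    fun a b c => by simp only [hσ.map_add_right, map_mul]⟩

lemma mul {τ : I → I → D} (hσ : IsBicharacter σ) (hτ : IsBicharacter τ) :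
    IsBicharacter fun x y => σ x y * τ x y :=
  ⟨fun a b c => by simp only [hσ.map_add_left, hτ.map_add_left]; ac_rfl,
    fun a b c => by simp only [hσ.map_add_right, hτ.map_add_right]; ac_rfl⟩

lemma isTwoCocycle (hσ : IsBicharacter σ) (i j l : I) :
    σ j l * σ i (j + l) = σ i j * σ (i + j) l := by
  rw [hσ.map_add_left, hσ.map_add_right]; ac_rfl

def addMonoidHomLeft (hσ : IsBicharacter σ) (y : I) : I →+ Additive D :=
  AddMonoidHom.mk' (fun x => Additive.ofMul (σ x y)) fun a b => hσ.map_add_left a b y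

def addMonoidHomRight (hσ : IsBicharacter σ) (x : I) : I →+ Additive D :=
  AddMonoidHom.mk' (fun y => Additive.ofMul (σ x y)) (hσ.map_add_right x)

lemma map_zsmul_left (hσ : IsBicharacter σ) (n : ℤ) (x y : I) : σ (n • x) y = σ x y ^ n :=
  map_zsmul (hσ.addMonoidHomLeft y) n x

lemma map_zsmul_right (hσ : IsBicharacter σ) (n : ℤ) (x y : I) : σ x (n • y) = σ x y ^ n :=
  map_zsmul (hσ.addMonoidHomRight x) n y

lemma map_sum_left {ι : Type*} (hσ : IsBicharacter σ) (s : Finset ι) (f : ι → I) (y : I) :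
    σ (∑ i ∈ s, f i) y = ∏ i ∈ s, σ (f i) y :=
  map_sum (hσ.addMonoidHomLeft y) f s

lemma map_sum_right {ι : Type*} (hσ : IsBicharacter σ) (s : Finset ι) (x : I) (f : ι → I) :
    σ x (∑ i ∈ s, f i) = ∏ i ∈ s, σ x (f i) :=
  map_sum (hσ.addMonoidHomRight x) f s

lemma mul_swap_eq_one (hσ : IsBicharacter σ) (hdiag : ∀ i, σ i i = 1) (x y : I) :
    σ x y * σ y x = 1 := by
  have h := hdiag (x + y)
  rwa [hσ.map_add_left, hσ.map_add_right, hσ.map_add_right, hdiag, hdiag, one_mul, mul_one] at h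

lemma map_zsmul_zsmul_self (hσ : IsBicharacter σ) (hdiag : ∀ i, σ i i = 1) (g : I) (m n : ℤ) :
    σ (m • g) (n • g) = 1 := by
  rw [hσ.map_zsmul_left, hσ.map_zsmul_right, hdiag, one_zpow, one_zpow]

theorem exists_mul_inv_swap_eq_of_sum_eq_id {ι : Type*} [Fintype ι] (hσ : IsBicharacter σ)
    (hdiag : ∀ i, σ i i = 1) (p : ι → I →+ I) (hsum : ∑ i, p i = AddMonoidHom.id I)
    (hcyclic : ∀ i, ∃ g, (p i).range ≤ AddSubgroup.zmultiples g) :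
    ∃ ε : I → I → D, IsBicharacter ε ∧ ∀ x y, ε x y * (ε y x)⁻¹ = σ x y := by
  classical
  let : LinearOrder ι := LinearOrder.lift' _ (Fintype.equivFin ι).injective
  have hisotropic : ∀ i x y, σ (p i x) (p i y) = 1 := by
    intro i x y
    obtain ⟨g, hg⟩ := hcyclic i
    obtain ⟨m, hm⟩ := AddSubgroup.mem_zmultiples_iff.mp (hg ⟨x, rfl⟩)
    obtain ⟨n, hn⟩ := AddSubgroup.mem_zmultiples_iff.mp (hg ⟨y, rfl⟩)
    rw [← hm, ← hn, hσ.map_zsmul_zsmul_self hdiag]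
  have hexpand : ∀ x y, σ x y = ∏ i, ∏ j, σ (p i x) (p j y) := by
    intro x y
    have hdecomp : ∀ z, ∑ i, p i z = z := fun z => by
      rw [← AddMonoidHom.finsetSum_apply, hsum, AddMonoidHom.id_apply]
    conv_lhs => rw [← hdecomp x, ← hdecomp y]
    simp only [hσ.map_sum_left, hσ.map_sum_right]
  have hfactor : ∀ x y i j, σ (p i x) (p j y) =
      (if i < j then σ (p i x) (p j y) else 1) * (if j < i then σ (p j y) (p i x) else 1)⁻¹ := by
    intro x y i j
    rcases lt_trichotomy i j with h | rfl | h
    · simp [h, h.not_gt]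
    · simp [hisotropic]
    · simp [h, h.not_gt, ← hσ.mul_swap_eq_one hdiag (p i x) (p j y)]
  refine ⟨fun x y => ∏ i, ∏ j, if i < j then σ (p i x) (p j y) else 1, ⟨?_, ?_⟩, ?_⟩
  · intro x y z
    simp only [map_add, hσ.map_add_left, ite_mul_one, prod_mul_distrib]
  · intro x y z
    simp only [map_add, hσ.map_add_right, ite_mul_one, prod_mul_distrib]
  · intro x y
    calc _ = ∏ i, ∏ j, (if i < j then σ (p i x) (p j y) else 1) *
          (if j < i then σ (p j y) (p i x) else 1)⁻¹ := by
          simp only [prod_mul_distrib, prod_inv_distrib]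
          rw [prod_comm (f := fun i j => if j < i then σ (p j y) (p i x) else 1)]
      _ = σ x y := by simp only [← hfactor, ← hexpand]

theorem exists_mul_inv_swap_eq_of_fg [AddGroup.FG I] (hσ : IsBicharacter σ)
    (hdiag : ∀ i, σ i i = 1) :
    ∃ ε : I → I → D, IsBicharacter ε ∧ ∀ x y, ε x y * (ε y x)⁻¹ = σ x y := by
  obtain ⟨ι, _, p, hsum, hcyclic⟩ := AddCommGroup.exists_sum_eq_id_range_le_zmultiples I
  exact hσ.exists_mul_inv_swap_eq_of_sum_eq_id hdiag p hsum hcyclic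

theorem exists_mul_inv_swap_eq_of_compactSpace [TopologicalSpace D] [IsTopologicalGroup D]
    [CompactSpace D] [T2Space D] (hσ : IsBicharacter σ) (hdiag : ∀ i, σ i i = 1) :
    ∃ ε : I → I → D, IsBicharacter ε ∧ ∀ x y, ε x y * (ε y x)⁻¹ = σ x y := by
  classical
  let C : I × I × I → Set (I → I → D) := fun t =>
    {ε | ε (t.1 + t.2.1) t.2.2 = ε t.1 t.2.2 * ε t.2.1 t.2.2 ∧
      ε t.1 (t.2.1 + t.2.2) = ε t.1 t.2.1 * ε t.1 t.2.2 ∧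
      ε t.1 t.2.1 * (ε t.2.1 t.1)⁻¹ = σ t.1 t.2.1}
  have hclosed : ∀ t, IsClosed (C t) := by
    have hcont : ∀ a b, Continuous fun ε : I → I → D => ε a b :=
      fun a b => (continuous_apply b).comp (continuous_apply a)
    intro t
    refine (isClosed_eq (hcont _ _) ((hcont _ _).mul (hcont _ _))).inter
      ((isClosed_eq (hcont _ _) ((hcont _ _).mul (hcont _ _))).inter
        (isClosed_eq ((hcont _ _).mul (hcont _ _).inv) continuous_const))
  -- Finitely many conditions only involve the finitely generated subgroup spanned by the
  -- coordinates, where a solution exists; extend it by `1` outside.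
  have hfinite : ∀ u : Finset (I × I × I), (Set.univ ∩ ⋂ t ∈ u, C t).Nonempty := by
    intro u
    let H := AddSubgroup.closure (u.biUnion fun t => {t.1, t.2.1, t.2.2} : Set I)
    obtain ⟨η, hη, hησ⟩ :=
      (hσ.comp_addMonoidHom H.subtype).exists_mul_inv_swap_eq_of_fg fun a => hdiag a
    refine ⟨fun x y => if h : x ∈ H ∧ y ∈ H then η ⟨x, h.1⟩ ⟨y, h.2⟩ else 1, trivial, ?_⟩
    simp only [Set.mem_iInter]
    rintro ⟨x, y, z⟩ ht
    have hmem : x ∈ H ∧ y ∈ H ∧ z ∈ H := by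
      refine ⟨?_, ?_, ?_⟩ <;>
        exact AddSubgroup.subset_closure (Finset.mem_biUnion.2 ⟨_, ht, by simp⟩)
    obtain ⟨hx, hy, hz⟩ := hmem
    simp only [C, Set.mem_ofPred_eq, hx, hy, hz, add_mem, and_self, dif_pos]
    exact ⟨hη.map_add_left ⟨x, hx⟩ ⟨y, hy⟩ ⟨z, hz⟩, hη.map_add_right ⟨x, hx⟩ ⟨y, hy⟩ ⟨z, hz⟩,
      hησ ⟨x, hx⟩ ⟨y, hy⟩⟩
  obtain ⟨ε, -, hε⟩ := isCompact_univ.inter_iInter_nonempty C hclosed hfinite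
  simp only [Set.mem_iInter] at hε
  exact ⟨ε, ⟨fun x y z => (hε (x, y, z)).1, fun x y z => (hε (x, y, z)).2.1⟩,
    fun x y => (hε (x, y, 0)).2.2⟩

end IsBicharacter

namespace Complex

noncomputable def unitsSqrtNorm : ℂˣ →* ℂˣ where
  toFun z := Units.mk0 (√‖(z : ℂ)‖ : ℝ) (by simp)
  map_one' := by ext; simp
  map_mul' z w := by ext; simp [Real.sqrt_mul (norm_nonneg _)]

noncomputable def unitsPhase : ℂˣ →* Circle where
  toFun z := ⟨z / ‖(z : ℂ)‖, mem_sphere_zero_iff_norm.2 (by simp)⟩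
  map_one' := Circle.ext <| show (1 : ℂ) / ‖(1 : ℂ)‖ = 1 by simp
  map_mul' z w := Circle.ext <| show ((z * w : ℂˣ) : ℂ) / ‖((z * w : ℂˣ) : ℂ)‖ =
    (z / ‖(z : ℂ)‖) * (w / ‖(w : ℂ)‖) by simp [mul_div_mul_comm]

lemma unitsSqrtNorm_sq_mul_unitsPhase (z : ℂˣ) :
    unitsSqrtNorm z ^ 2 * Circle.toUnits (unitsPhase z) = z := by
  ext
  show ((√‖(z : ℂ)‖ : ℝ) : ℂ) ^ 2 * (z / ‖(z : ℂ)‖) = z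
  rw [← ofReal_pow, Real.sq_sqrt (norm_nonneg _), mul_div_cancel₀]
  simp

end Complex

theorem IsBicharacter.exists_mul_inv_swap_eq_units_complex {I : Type*} [AddCommGroup I]
    {σ : I → I → ℂˣ} (hσ : IsBicharacter σ) (hdiag : ∀ i, σ i i = 1) :
    ∃ ε : I → I → ℂˣ, IsBicharacter ε ∧ ∀ x y, ε x y * (ε y x)⁻¹ = σ x y := by
  obtain ⟨η, hη, hησ⟩ :=
    (hσ.comp_monoidHom Complex.unitsPhase).exists_mul_inv_swap_eq_of_compactSpace (by simp [hdiag])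
  refine ⟨fun x y => Complex.unitsSqrtNorm (σ x y) * Circle.toUnits (η x y),
    (hσ.comp_monoidHom _).mul (hη.comp_monoidHom _), fun x y => ?_⟩
  have hswap : Complex.unitsSqrtNorm (σ y x) = (Complex.unitsSqrtNorm (σ x y))⁻¹ := by
    rw [← map_inv, eq_inv_of_mul_eq_one_right (hσ.mul_swap_eq_one hdiag x y)]
  calc _ = Complex.unitsSqrtNorm (σ x y) ^ 2 * Circle.toUnits (η x y * (η y x)⁻¹) := by
          beta_reduce; rw [hswap, map_mul, map_inv, mul_inv, inv_inv, sq]; ac_rfl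
    _ = σ x y := by rw [hησ, Complex.unitsSqrtNorm_sq_mul_unitsPhase]

/-- Let `I` be an additively written abelian group and
`σ : I × I → ℂˣ` a bicharacter (multiplicative in each variable) satisfying
`σ(i, i) = 1` for all `i`.  Then there exists a 2-cocycle `ε : I × I → ℂˣ`
(i.e. `ε(j, l)·ε(i, j+l) = ε(i, j)·ε(i+j, l)` for all `i, j, l`) such that
`ε(i, j)·ε(j, i)⁻¹ = σ(i, j)` for all `i, j ∈ I`. -/
theorem exists_two_cocycle_of_bicharacter_diagonal_one
    {I : Type*} [AddCommGroup I] (σ : I → I → ℂˣ)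
    (hσ₁ : ∀ i j l : I, σ (i + j) l = σ i l * σ j l)
    (hσ₂ : ∀ i j l : I, σ i (j + l) = σ i j * σ i l)
    (hσdiag : ∀ i : I, σ i i = 1) :
    ∃ ε : I → I → ℂˣ,
      (∀ i j l : I, ε j l * ε i (j + l) = ε i j * ε (i + j) l) ∧
      (∀ i j : I, ε i j * (ε j i)⁻¹ = σ i j) := by
  obtain ⟨ε, hε, hεσ⟩ := IsBicharacter.exists_mul_inv_swap_eq_units_complex ⟨hσ₁, hσ₂⟩ hσdiag
  exact ⟨ε, hε.isTwoCocycle, hεσ⟩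
end
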